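/- arXiv:2105.06079 — 3 statements merged into one kernel-verified Lean document; each statement's English description precedes it below -/
import Mathlib

section
/- For every pair of real numbers r₀, r₁, the inequality (r₁² − r₁r₀) · G̃_s(r₀) ≥ F_s(r₁) − F_s(r₀) holds. -/
/-!
Writing `W(x) = ∫₀ˣ w` for the kernel `w(r) = (1 + r²)^(-(d+1+2s)/2)`, we have `F_s' = W` and
`W(x) = x · G̃_s(x)`. Both `F_s` and `G̃_s` are even, so we may replace `r₀, r₁` by `a = |r₀|` and
`b = |r₁|`, which only decreases `r₁² - r₁ r₀` to `b² - b a`. Since `w ≥ 0`, `W` is monotone and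
`F_s` is convex, so `F_s(b) - F_s(a) ≤ W(b) (b - a) = b G̃_s(b) (b - a)`; finally `G̃_s` is
antitone on `[0, ∞)` because `w` is, and `b - a` has the sign of `G̃_s(a) - G̃_s(b)`.
-/

open MeasureTheory Real Set

theorem sub_le_mul_sub_of_hasDerivAt_of_monotone {f f' : ℝ → ℝ}
    (hf : ∀ x, HasDerivAt f (f' x) x) (hf' : Monotone f') (a b : ℝ) :
    f b - f a ≤ f' b * (b - a) := by
  have hfc : Continuous f := continuous_iff_continuousAt.2 fun x => (hf x).continuousAt
  rcases lt_trichotomy a b with hab | rfl | hba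
  · obtain ⟨c, hc, hslope⟩ :=
      exists_hasDerivAt_eq_slope f f' hab hfc.continuousOn fun x _ => hf x
    rw [← (eq_div_iff (sub_ne_zero.2 hab.ne')).1 hslope]
    exact mul_le_mul_of_nonneg_right (hf' hc.2.le) (sub_nonneg.2 hab.le)
  · simp
  · obtain ⟨c, hc, hslope⟩ :=
      exists_hasDerivAt_eq_slope f f' hba hfc.continuousOn fun x _ => hf x
    have hmvt : f b - f a = f' c * (b - a) := by
      linear_combination (eq_div_iff (sub_ne_zero.2 hba.ne')).1 hslope
    rw [hmvt]
    exact mul_le_mul_of_nonpos_right (hf' hc.1.le) (sub_nonpos.2 hba.le)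

noncomputable def secondPrimitive (w : ℝ → ℝ) (x : ℝ) : ℝ :=
  ∫ r in (0:ℝ)..x, (x - r) * w r

noncomputable def segmentMean (w : ℝ → ℝ) (x : ℝ) : ℝ :=
  ∫ r in (0:ℝ)..1, w (x * r)

section

variable {w : ℝ → ℝ}

theorem secondPrimitive_eq_mul_sub (hw : Continuous w) (x : ℝ) :
    secondPrimitive w x = x * (∫ r in (0:ℝ)..x, w r) - ∫ r in (0:ℝ)..x, r * w r := by
  simp only [secondPrimitive, sub_mul]
  rw [intervalIntegral.integral_sub (f := fun r => x * w r) (g := fun r => r * w r)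
    ((continuous_const.mul hw).intervalIntegrable 0 x)
    ((continuous_id.mul hw).intervalIntegrable 0 x), intervalIntegral.integral_const_mul]

theorem hasDerivAt_secondPrimitive (hw : Continuous w) (x : ℝ) :
    HasDerivAt (secondPrimitive w) (∫ r in (0:ℝ)..x, w r) x := by
  have hW : HasDerivAt (fun x => ∫ r in (0:ℝ)..x, w r) (w x) x :=
    (hw.integral_hasStrictDerivAt 0 x).hasDerivAt
  have hV : HasDerivAt (fun x => ∫ r in (0:ℝ)..x, r * w r) (x * w x) x :=
    ((continuous_id.mul hw).integral_hasStrictDerivAt 0 x).hasDerivAt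
  rw [funext (secondPrimitive_eq_mul_sub hw)]
  exact (((hasDerivAt_id x).mul hW).sub hV).congr_deriv (by simp)

theorem secondPrimitive_sub_le (hw : Continuous w) (hw0 : ∀ r, 0 ≤ w r) (a b : ℝ) :
    secondPrimitive w b - secondPrimitive w a ≤ (∫ r in (0:ℝ)..b, w r) * (b - a) :=
  sub_le_mul_sub_of_hasDerivAt_of_monotone (hasDerivAt_secondPrimitive hw)
    (monotone_of_hasDerivAt_nonneg (fun x => (hw.integral_hasStrictDerivAt 0 x).hasDerivAt)
      fun r => hw0 r) a b

theorem secondPrimitive_neg (hw : ∀ r, w (-r) = w r) (x : ℝ) :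
    secondPrimitive w (-x) = secondPrimitive w x := by
  have hflip := intervalIntegral.integral_comp_neg (a := 0) (b := x) fun r => (-x - r) * w r
  simp only [sub_neg_eq_add, hw, neg_zero] at hflip
  rw [secondPrimitive, intervalIntegral.integral_symm, ← hflip, secondPrimitive,
    ← intervalIntegral.integral_neg]
  congr 1 with r
  ring

theorem secondPrimitive_abs (hw : ∀ r, w (-r) = w r) (x : ℝ) :
    secondPrimitive w |x| = secondPrimitive w x := by
  rcases abs_choice x with h | h <;> simp only [h, secondPrimitive_neg hw]

theorem segmentMean_abs (hw : ∀ r, w (-r) = w r) (x : ℝ) :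
    segmentMean w |x| = segmentMean w x := by
  rcases abs_choice x with h | h <;> simp only [segmentMean, h, neg_mul, hw]

theorem mul_segmentMean (x : ℝ) : x * segmentMean w x = ∫ r in (0:ℝ)..x, w r := by
  rw [segmentMean, intervalIntegral.mul_integral_comp_mul_left, mul_zero, mul_one]

theorem segmentMean_nonneg (hw0 : ∀ r, 0 ≤ w r) (x : ℝ) : 0 ≤ segmentMean w x :=
  intervalIntegral.integral_nonneg zero_le_one fun _ _ => hw0 _

theorem antitoneOn_segmentMean (hw : Continuous w) (hw_anti : AntitoneOn w (Ici 0)) :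
    AntitoneOn (segmentMean w) (Ici 0) := by
  intro a ha b _ hab
  refine intervalIntegral.integral_mono_on zero_le_one
    ((hw.comp (continuous_const_mul b)).intervalIntegrable 0 1)
    ((hw.comp (continuous_const_mul a)).intervalIntegrable 0 1) fun r hr => ?_
  have har : 0 ≤ a * r := mul_nonneg ha hr.1
  exact hw_anti har (har.trans (mul_le_mul_of_nonneg_right hab hr.1))
    (mul_le_mul_of_nonneg_right hab hr.1)

theorem secondPrimitive_sub_le_mul_segmentMean (hw : Continuous w) (hw0 : ∀ r, 0 ≤ w r)
    (hw_even : ∀ r, w (-r) = w r) (hw_anti : AntitoneOn w (Ici 0)) (r₀ r₁ : ℝ) :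
    secondPrimitive w r₁ - secondPrimitive w r₀ ≤ (r₁ ^ 2 - r₁ * r₀) * segmentMean w r₀ := by
  rw [← secondPrimitive_abs hw_even r₁, ← secondPrimitive_abs hw_even r₀,
    ← segmentMean_abs hw_even r₀]
  set a := |r₀|
  set b := |r₁|
  have ha : 0 ≤ a := abs_nonneg r₀
  have hb : 0 ≤ b := abs_nonneg r₁
  have hmean : b * segmentMean w b * (b - a) ≤ (b ^ 2 - b * a) * segmentMean w a := by
    rcases le_total a b with hab | hba
    · have := antitoneOn_segmentMean hw hw_anti ha hb hab
      nlinarith [mul_le_mul_of_nonneg_left this (mul_nonneg hb (sub_nonneg.2 hab))]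
    · have := antitoneOn_segmentMean hw hw_anti hb ha hba
      nlinarith [mul_le_mul_of_nonneg_left this (mul_nonneg hb (sub_nonneg.2 hba))]
  have hsq : b ^ 2 - b * a ≤ r₁ ^ 2 - r₁ * r₀ := by
    have : r₁ * r₀ ≤ b * a := by rw [← abs_mul]; exact le_abs_self _
    nlinarith [sq_abs r₁]
  calc secondPrimitive w b - secondPrimitive w a
      ≤ b * segmentMean w b * (b - a) := by
        rw [mul_segmentMean]; exact secondPrimitive_sub_le hw hw0 a b
    _ ≤ (b ^ 2 - b * a) * segmentMean w a := hmean
    _ ≤ (r₁ ^ 2 - r₁ * r₀) * segmentMean w a :=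
        mul_le_mul_of_nonneg_right hsq (segmentMean_nonneg hw0 a)

end

theorem continuous_one_add_sq_rpow (α : ℝ) : Continuous fun r : ℝ => (1 + r ^ 2) ^ α :=
  (continuous_const.add (continuous_pow 2)).rpow_const fun r => Or.inl (by positivity : (0:ℝ) < 1 + r ^ 2).ne'

theorem antitoneOn_one_add_sq_rpow_neg {α : ℝ} (hα : 0 ≤ α) :
    AntitoneOn (fun r : ℝ => (1 + r ^ 2) ^ (-α)) (Ici 0) := by
  intro a ha b _ hab
  exact rpow_le_rpow_of_nonpos (by positivity)
    (by gcongr) (neg_nonpos.2 hα)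

theorem key_convexity_inequality_general (d : ℕ) (s : ℝ) (hs : s ∈ Set.Ioo (0:ℝ) (1/2))
    (F Gt : ℝ → ℝ)
    (hF : ∀ ρ : ℝ, F ρ = ∫ r in (0:ℝ)..ρ, (ρ - r) / (1 + r^2) ^ (((d:ℝ) + 1 + 2*s)/2))
    (hGt : ∀ ρ : ℝ, Gt ρ = ∫ r in (0:ℝ)..1, (1 + ρ^2 * r^2) ^ (-((d:ℝ) + 1 + 2*s)/2)) :
    ∀ r₀ r₁ : ℝ, (r₁^2 - r₁ * r₀) * Gt r₀ ≥ F r₁ - F r₀ := by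
  intro r₀ r₁
  set α : ℝ := ((d:ℝ) + 1 + 2*s)/2
  have hα : 0 ≤ α := by have := hs.1; positivity
  set w : ℝ → ℝ := fun r => (1 + r ^ 2) ^ (-α)
  have hFw : F = secondPrimitive w := funext fun ρ => by
    rw [hF, secondPrimitive]
    congr 1 with r
    simp only [w, rpow_neg (by positivity : (0:ℝ) ≤ 1 + r ^ 2), div_eq_mul_inv]
  have hGw : Gt = segmentMean w := funext fun ρ => by
    rw [hGt, segmentMean]
    congr 1 with r
    simp only [w, neg_div, mul_pow]
    rfl
  rw [hFw, hGw, ge_iff_le]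
  exact secondPrimitive_sub_le_mul_segmentMean (continuous_one_add_sq_rpow _)
    (fun r => by positivity) (fun r => by simp) (antitoneOn_one_add_sq_rpow_neg hα) r₀ r₁

theorem key_convexity_inequality (d : ℕ) (hd : 1 ≤ d) (s : ℝ) (hs : s ∈ Set.Ioo (0:ℝ) (1/2))
    (F Gt : ℝ → ℝ)
    (hF : ∀ ρ : ℝ, F ρ = ∫ r in (0:ℝ)..ρ, (ρ - r) / (1 + r^2) ^ (((d:ℝ) + 1 + 2*s)/2))
    (hGt : ∀ ρ : ℝ, Gt ρ = ∫ r in (0:ℝ)..1, (1 + ρ^2 * r^2) ^ (-((d:ℝ) + 1 + 2*s)/2)) :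
    ∀ r₀ r₁ : ℝ, (r₁^2 - r₁ * r₀) * Gt r₀ ≥ F r₁ - F r₀ :=
  key_convexity_inequality_general d s hs F Gt hF hGt
end

section
/- Let a_u(u, u−w) denote the form applied with weight from u, evaluated at (u, u−w). Then a_u(u, u−w) ≥ I_s[u] − I_s[w] for any u, w with finite energy agreeing outside Ω (convexity-type estimate following from the pointwise inequality (r₁²−r₀r₁)G̃_s(r₀) ≥ F_s(r₁)−F_s(r₀) applied with r₀ = difference quotient of w and r₁ = difference quotient of u). -/
/-!
Writing `g r = (1 + r²)^(-α/2)`, the integrand of `F` is `(ρ - r) g r`, so `F'' = g ≥ 0` and `F` is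
convex, while the substitution `r ↦ ρ r` gives `ρ · Gt ρ = ∫₀^ρ g = F' ρ`. The tangent line inequality
`F ρ₁ - F ρ₀ ≤ (ρ₁ - ρ₀) ρ₁ Gt ρ₁` at the difference quotients `ρ₁` of `u` and `ρ₀` of `w`, multiplied
by `|x - y|^(1 - d - 2s)`, bounds the integrand of `I_s[u] - I_s[w]` pointwise by that of
`a_u(u, u - w)`; integrating gives the estimate.
-/

open MeasureTheory Real Set

/-- The primitive of `∫₀^ρ g` vanishing at `0`. -/
noncomputable def doublePrimitive (g : ℝ → ℝ) (ρ : ℝ) : ℝ :=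
  ∫ r in (0:ℝ)..ρ, (ρ - r) * g r

theorem integral_sub_mul_nonpos {g : ℝ → ℝ} (hg : ∀ r, 0 ≤ g r) (a b : ℝ) :
    ∫ r in a..b, (a - r) * g r ≤ 0 := by
  rcases le_total a b with hab | hba
  · have hnonneg : 0 ≤ ∫ r in a..b, (r - a) * g r :=
      intervalIntegral.integral_nonneg hab fun r hr => mul_nonneg (by linarith [hr.1]) (hg r)
    have hneg : ∫ r in a..b, (a - r) * g r = -∫ r in a..b, (r - a) * g r := by
      rw [← intervalIntegral.integral_neg]
      exact intervalIntegral.integral_congr fun r _ => by ring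
    linarith
  · rw [intervalIntegral.integral_symm, neg_nonpos]
    exact intervalIntegral.integral_nonneg hba fun r hr => mul_nonneg (by linarith [hr.2]) (hg r)

/-- Tangent line inequality for the convex function `doublePrimitive g`. -/
theorem doublePrimitive_sub_le {g : ℝ → ℝ} (hg : Continuous g) (hg0 : ∀ r, 0 ≤ g r) (ρ₀ ρ₁ : ℝ) :
    doublePrimitive g ρ₁ - doublePrimitive g ρ₀ ≤ (ρ₁ - ρ₀) * ∫ r in (0:ℝ)..ρ₁, g r := by
  have hint : ∀ c a b : ℝ, IntervalIntegrable (fun r => (c - r) * g r) volume a b :=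
    fun c a b => ((continuous_const.sub continuous_id).mul hg).intervalIntegrable a b
  have hsplit : doublePrimitive g ρ₀ =
      (∫ r in (0:ℝ)..ρ₁, (ρ₀ - r) * g r) + ∫ r in ρ₁..ρ₀, (ρ₀ - r) * g r :=
    (intervalIntegral.integral_add_adjacent_intervals (hint _ _ _) (hint _ _ _)).symm
  have hshift : doublePrimitive g ρ₁ - ∫ r in (0:ℝ)..ρ₁, (ρ₀ - r) * g r =
      (ρ₁ - ρ₀) * ∫ r in (0:ℝ)..ρ₁, g r := by
    rw [doublePrimitive, ← intervalIntegral.integral_sub (hint _ _ _) (hint _ _ _),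
      ← intervalIntegral.integral_const_mul]
    exact intervalIntegral.integral_congr fun r _ => by ring
  have hremainder := integral_sub_mul_nonpos hg0 ρ₀ ρ₁
  rw [intervalIntegral.integral_symm ρ₀ ρ₁] at hsplit
  linarith

theorem mul_integral_comp_mul_unitInterval (g : ℝ → ℝ) (ρ : ℝ) :
    ρ * ∫ r in (0:ℝ)..1, g (ρ * r) = ∫ r in (0:ℝ)..ρ, g r := by
  rw [← smul_eq_mul, intervalIntegral.smul_integral_comp_mul_left, mul_zero, mul_one]

theorem energy_density_tangent_le (α : ℝ) (F Gt : ℝ → ℝ)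
    (hF : ∀ ρ : ℝ, F ρ = ∫ r in (0:ℝ)..ρ, (ρ - r) / (1 + r^2) ^ (α/2))
    (hGt : ∀ ρ : ℝ, Gt ρ = ∫ r in (0:ℝ)..1, (1 + ρ^2 * r^2) ^ (-α/2)) (ρ₀ ρ₁ : ℝ) :
    F ρ₁ - F ρ₀ ≤ (ρ₁ - ρ₀) * (ρ₁ * Gt ρ₁) := by
  set g : ℝ → ℝ := fun r => (1 + r^2) ^ (-(α/2))
  have hg : Continuous g := (by fun_prop : Continuous fun r : ℝ => 1 + r^2).rpow_const
    fun r => Or.inl (by positivity)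
  have hF' : F = doublePrimitive g := funext fun ρ => by
    rw [hF, doublePrimitive]
    refine intervalIntegral.integral_congr fun r _ => ?_
    rw [div_eq_mul_inv, ← rpow_neg (by positivity)]
  have hGt' : ρ₁ * Gt ρ₁ = ∫ r in (0:ℝ)..ρ₁, g r := by
    rw [← mul_integral_comp_mul_unitInterval, hGt]
    congr 1
    exact intervalIntegral.integral_congr fun r _ => by simp only [g, neg_div]; ring_nf
  rw [hF', hGt']
  exact doublePrimitive_sub_le hg (fun r => rpow_nonneg (by positivity) _) ρ₀ ρ₁

theorem sub_mul_rpow_le_of_tangent {F Gt : ℝ → ℝ}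
    (htangent : ∀ ρ₀ ρ₁, F ρ₁ - F ρ₀ ≤ (ρ₁ - ρ₀) * (ρ₁ * Gt ρ₁))
    (β : ℝ) {D : ℝ} (hD : 0 < D) (p q : ℝ) :
    F (p / D) * D ^ (β + 2) - F (q / D) * D ^ (β + 2) ≤ Gt (p / D) * (p * (p - q)) * D ^ β := by
  have hpow : D ^ (β + 2) = D ^ β * D ^ 2 := by
    rw [rpow_add hD, rpow_two]
  calc F (p / D) * D ^ (β + 2) - F (q / D) * D ^ (β + 2)
      = (F (p / D) - F (q / D)) * (D ^ β * D ^ 2) := by rw [hpow]; ring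
    _ ≤ (p / D - q / D) * (p / D * Gt (p / D)) * (D ^ β * D ^ 2) :=
        mul_le_mul_of_nonneg_right (htangent _ _) (by positivity)
    _ = Gt (p / D) * (p * (p - q)) * D ^ β := by field_simp

theorem difference_quotient_energy_sub_le {F Gt : ℝ → ℝ}
    (htangent : ∀ ρ₀ ρ₁, F ρ₁ - F ρ₀ ≤ (ρ₁ - ρ₀) * (ρ₁ * Gt ρ₁))
    {X : Type*} [MetricSpace X] (u w : X → ℝ) (x y : X) {β γ : ℝ} (hγ : γ = β + 2) :
    F ((u x - u y) / dist x y) * dist x y ^ γ - F ((w x - w y) / dist x y) * dist x y ^ γ ≤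
      Gt ((u x - u y) / dist x y) * ((u x - u y) * ((u x - w x) - (u y - w y))) *
        dist x y ^ β := by
  rcases eq_or_ne x y with rfl | hxy
  · simp
  · have hdiff : (u x - w x) - (u y - w y) = (u x - u y) - (w x - w y) := by ring
    rw [hγ, hdiff]
    exact sub_mul_rpow_le_of_tangent htangent β (dist_pos.2 hxy) _ _

theorem form_convexity_estimate_general (d : ℕ) (s : ℝ)
    (F Gt : ℝ → ℝ)
    (hF : ∀ ρ : ℝ, F ρ = ∫ r in (0:ℝ)..ρ, (ρ - r) / (1 + r^2) ^ (((d:ℝ) + 1 + 2*s)/2))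
    (hGt : ∀ ρ : ℝ, Gt ρ = ∫ r in (0:ℝ)..1, (1 + ρ^2 * r^2) ^ (-((d:ℝ) + 1 + 2*s)/2))
    (QΩ : Set (EuclideanSpace ℝ (Fin d) × EuclideanSpace ℝ (Fin d)))
    (Is : (EuclideanSpace ℝ (Fin d) → ℝ) → ℝ)
    (hIs : ∀ u, Is u =
      ∫ z in QΩ, F ((u z.1 - u z.2) / dist z.1 z.2) * (dist z.1 z.2) ^ (1 - (d:ℝ) - 2*s))
    (a : (EuclideanSpace ℝ (Fin d) → ℝ) → (EuclideanSpace ℝ (Fin d) → ℝ) →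
      (EuclideanSpace ℝ (Fin d) → ℝ) → ℝ)
    (ha : ∀ u w v, a u w v =
      ∫ z in QΩ, Gt ((u z.1 - u z.2) / dist z.1 z.2) *
        ((w z.1 - w z.2) * (v z.1 - v z.2)) * (dist z.1 z.2) ^ (-((d:ℝ) + 1 + 2*s)))
    (u w : EuclideanSpace ℝ (Fin d) → ℝ)
    -- finite energies and absolutely convergent integrals
    (hintu : IntegrableOn (fun z => F ((u z.1 - u z.2) / dist z.1 z.2) *
      (dist z.1 z.2) ^ (1 - (d:ℝ) - 2*s)) QΩ)
    (hintw : IntegrableOn (fun z => F ((w z.1 - w z.2) / dist z.1 z.2) *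
      (dist z.1 z.2) ^ (1 - (d:ℝ) - 2*s)) QΩ)
    (hinta : IntegrableOn (fun z => Gt ((u z.1 - u z.2) / dist z.1 z.2) *
      ((u z.1 - u z.2) * ((u z.1 - w z.1) - (u z.2 - w z.2))) *
      (dist z.1 z.2) ^ (-((d:ℝ) + 1 + 2*s))) QΩ) :
    a u u (fun x => u x - w x) ≥ Is u - Is w := by
  have htangent := energy_density_tangent_le ((d:ℝ) + 1 + 2*s) F Gt hF hGt
  have hpointwise := fun z : EuclideanSpace ℝ (Fin d) × EuclideanSpace ℝ (Fin d) =>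
    difference_quotient_energy_sub_le htangent u w z.1 z.2
      (γ := 1 - (d:ℝ) - 2*s) (β := -((d:ℝ) + 1 + 2*s)) (by ring)
  rw [ge_iff_le, ha, hIs, hIs, ← integral_sub hintu hintw]
  exact integral_mono (hintu.sub hintw) hinta hpointwise

theorem form_convexity_estimate (d : ℕ) (hd : 1 ≤ d) (s : ℝ) (hs : s ∈ Set.Ioo (0:ℝ) (1/2))
    (Ω : Set (EuclideanSpace ℝ (Fin d)))
    (F Gt : ℝ → ℝ)
    (hF : ∀ ρ : ℝ, F ρ = ∫ r in (0:ℝ)..ρ, (ρ - r) / (1 + r^2) ^ (((d:ℝ) + 1 + 2*s)/2))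
    (hGt : ∀ ρ : ℝ, Gt ρ = ∫ r in (0:ℝ)..1, (1 + ρ^2 * r^2) ^ (-((d:ℝ) + 1 + 2*s)/2))
    (QΩ : Set (EuclideanSpace ℝ (Fin d) × EuclideanSpace ℝ (Fin d)))
    (hQ : QΩ = {z | z.1 ∈ Ω ∨ z.2 ∈ Ω})
    (Is : (EuclideanSpace ℝ (Fin d) → ℝ) → ℝ)
    (hIs : ∀ u, Is u =
      ∫ z in QΩ, F ((u z.1 - u z.2) / dist z.1 z.2) * (dist z.1 z.2) ^ (1 - (d:ℝ) - 2*s))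
    (a : (EuclideanSpace ℝ (Fin d) → ℝ) → (EuclideanSpace ℝ (Fin d) → ℝ) →
      (EuclideanSpace ℝ (Fin d) → ℝ) → ℝ)
    (ha : ∀ u w v, a u w v =
      ∫ z in QΩ, Gt ((u z.1 - u z.2) / dist z.1 z.2) *
        ((w z.1 - w z.2) * (v z.1 - v z.2)) * (dist z.1 z.2) ^ (-((d:ℝ) + 1 + 2*s)))
    (u w : EuclideanSpace ℝ (Fin d) → ℝ)
    -- u and w agree outside Ω
    (hag : ∀ x, x ∉ Ω → u x = w x)
    -- finite energies and absolutely convergent integrals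
    (hintu : IntegrableOn (fun z => F ((u z.1 - u z.2) / dist z.1 z.2) *
      (dist z.1 z.2) ^ (1 - (d:ℝ) - 2*s)) QΩ)
    (hintw : IntegrableOn (fun z => F ((w z.1 - w z.2) / dist z.1 z.2) *
      (dist z.1 z.2) ^ (1 - (d:ℝ) - 2*s)) QΩ)
    (hinta : IntegrableOn (fun z => Gt ((u z.1 - u z.2) / dist z.1 z.2) *
      ((u z.1 - u z.2) * ((u z.1 - w z.1) - (u z.2 - w z.2))) *
      (dist z.1 z.2) ^ (-((d:ℝ) + 1 + 2*s))) QΩ) :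
    a u u (fun x => u x - w x) ≥ Is u - Is w :=
  form_convexity_estimate_general d s F Gt hF hGt QΩ Is hIs a ha u w hintu hintw hinta
end

section
/- Let v : ℝ^d → ℝ be bounded with |v| ≤ L, let Ω be a bounded domain contained in a ball of radius R₀, and let Ω_H ⊇ Ω satisfy dist(x, Ω) ≥ H for x ∉ Ω_H. Then ∫_Ω ∫_{Ω_H^c} |x−y|^{−(d+2s+1)} dy dx ≤ C(d,s)·|Ω|·H^{−1−2s}, and consequently |I_s[v] − I_s[T_H v]| ≤ C'(d,s,L,|Ω|)·H^{−1−2s}, where T_H v agrees with v on Ω_H and |T_H v| ≤ L everywhere, using that F_s(ρ) ≤ ρ²/2. -/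
/-!
Where `v` and `T_H v` agree (on `Ω_H`) their energy integrands coincide, so on `Q_Ω` the two
integrands differ only at pairs with one point in `Ω` and the other at distance at least `H`
from `Ω`. There `F_s(ρ) ≤ ρ² / 2` bounds each integrand by `2 L² |x - y| ^ (-p)`, `p = d + 2s + 1`,
and in polar coordinates `∫_{|x - y| ≥ H} |x - y| ^ (-p) dy = d |B₁| H ^ (d - p) / (p - d)`.
Integrating over `x ∈ Ω` gives both estimates.
-/

open MeasureTheory Real Set Metric Module

noncomputable def energyDensity (q ρ : ℝ) : ℝ := ∫ r in (0:ℝ)..ρ, (ρ - r) / (1 + r ^ 2) ^ q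

lemma energyDensity_neg (q ρ : ℝ) : energyDensity q (-ρ) = energyDensity q ρ := by
  have h := intervalIntegral.integral_comp_neg (a := 0) (b := ρ)
    (fun r => (-ρ - r) / (1 + r ^ 2) ^ q)
  simp only [neg_zero, neg_sq, sub_neg_eq_add] at h
  rw [energyDensity, energyDensity, intervalIntegral.integral_symm, ← h,
    ← intervalIntegral.integral_neg]
  congr 1 with r
  rw [← neg_div]
  ring

lemma energyDensity_nonneg_and_le_of_nonneg {q ρ : ℝ} (hq : 0 ≤ q) (hρ : 0 ≤ ρ) :
    0 ≤ energyDensity q ρ ∧ energyDensity q ρ ≤ ρ ^ 2 / 2 := by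
  have hweight : ∀ r : ℝ, 1 ≤ (1 + r ^ 2) ^ q := fun r => one_le_rpow (by nlinarith) hq
  have hcont : Continuous fun r : ℝ => (ρ - r) / (1 + r ^ 2) ^ q :=
    (continuous_const.sub continuous_id).div (by fun_prop (disch := positivity))
      fun r => (zero_lt_one.trans_le (hweight r)).ne'
  constructor
  · refine intervalIntegral.integral_nonneg hρ fun r hr => div_nonneg (by linarith [hr.2]) ?_
    exact zero_le_one.trans (hweight r)
  · calc energyDensity q ρ ≤ ∫ r in (0:ℝ)..ρ, (ρ - r) := by
          refine intervalIntegral.integral_mono_on hρ (hcont.intervalIntegrable _ _)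
            ((continuous_const.sub continuous_id).intervalIntegrable _ _)
            fun r hr => div_le_self (by linarith [hr.2]) (hweight r)
      _ = ρ ^ 2 / 2 := by
          rw [intervalIntegral.integral_sub intervalIntegrable_const
            intervalIntegral.intervalIntegrable_id]
          simp only [intervalIntegral.integral_const, sub_zero, smul_eq_mul, integral_id]
          ring

lemma energyDensity_nonneg_and_le {q : ℝ} (hq : 0 ≤ q) (ρ : ℝ) :
    0 ≤ energyDensity q ρ ∧ energyDensity q ρ ≤ ρ ^ 2 / 2 := by
  rcases le_total 0 ρ with hρ | hρ
  · exact energyDensity_nonneg_and_le_of_nonneg hq hρ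
  · rw [← energyDensity_neg, ← neg_sq]
    exact energyDensity_nonneg_and_le_of_nonneg hq (neg_nonneg.2 hρ)

lemma abs_energyDensity_div_mul_rpow_le {q a t M : ℝ} (e : ℝ) (hq : 0 ≤ q) (ha : |a| ≤ M)
    (ht : 0 ≤ t) : |energyDensity q (a / t) * t ^ e| ≤ M ^ 2 / 2 * t ^ (e - 2) := by
  obtain rfl | ht := ht.eq_or_lt
  · simp only [energyDensity, div_zero, zero_sub, intervalIntegral.integral_same, zero_mul,
      abs_zero]
    positivity
  obtain ⟨hF₀, hF⟩ := energyDensity_nonneg_and_le hq (a / t)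
  rw [abs_of_nonneg (by positivity)]
  calc energyDensity q (a / t) * t ^ e ≤ (a / t) ^ 2 / 2 * t ^ e := by gcongr
    _ = a ^ 2 / 2 * t ^ (e - 2) := by
        rw [rpow_sub ht, rpow_two]
        field_simp
    _ ≤ M ^ 2 / 2 * t ^ (e - 2) := by
        gcongr ?_ / 2 * _
        exact sq_le_sq' (abs_le.1 ha).1 (abs_le.1 ha).2

lemma le_dist_of_le_infDist {X : Type*} [PseudoMetricSpace X] {H : ℝ} {Ω : Set X} {x y : X}
    (hx : x ∈ Ω) (hy : H ≤ infDist y Ω) : H ≤ dist x y :=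
  hy.trans ((infDist_le_dist_of_mem hx).trans_eq (dist_comm y x))

lemma indicator_le_dist_eq_indicator_Ici_norm_sub {E : Type*} [SeminormedAddCommGroup E]
    {p H : ℝ} (x : E) :
    {y | H ≤ dist x y}.indicator (fun y => dist x y ^ (-p)) =
      fun y => (Ici H).indicator (fun r => r ^ (-p)) ‖y - x‖ := by
  ext y
  rw [← dist_eq_norm']
  exact indicator_comp_right (g := fun r : ℝ => r ^ (-p)) (dist x)

noncomputable def energyIntegrand {X : Type*} [PseudoMetricSpace X] (q e : ℝ) (u : X → ℝ)
    (z : X × X) : ℝ :=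
  energyDensity q ((u z.1 - u z.2) / dist z.1 z.2) * dist z.1 z.2 ^ e

lemma abs_energyIntegrand_le {X : Type*} [PseudoMetricSpace X] {q L : ℝ} (e : ℝ) (hq : 0 ≤ q)
    {u : X → ℝ} (hu : ∀ x, |u x| ≤ L) (z : X × X) :
    |energyIntegrand q e u z| ≤ 2 * L ^ 2 * dist z.1 z.2 ^ (e - 2) := by
  have hdiff : |u z.1 - u z.2| ≤ 2 * L := by linarith [abs_sub (u z.1) (u z.2), hu z.1, hu z.2]
  have := abs_energyDensity_div_mul_rpow_le e hq hdiff (dist_nonneg (x := z.1) (y := z.2))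
  rw [energyIntegrand]
  linarith

lemma abs_energyIntegrand_sub_le_indicator {X : Type*} [PseudoMetricSpace X] {q L : ℝ} (e : ℝ)
    (hq : 0 ≤ q) {Ω Ω' D : Set X} (hΩΩ' : Ω ⊆ Ω') (hD : Ω'ᶜ ⊆ D) {u w : X → ℝ}
    (hu : ∀ x, |u x| ≤ L) (hw : ∀ x, |w x| ≤ L) (huw : EqOn u w Ω') {z : X × X}
    (hz : z.1 ∈ Ω ∨ z.2 ∈ Ω) :
    |energyIntegrand q e u z - energyIntegrand q e w z| ≤
      4 * L ^ 2 * ((Ω ×ˢ D).indicator (fun z => dist z.1 z.2 ^ (e - 2)) z +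
        (D ×ˢ Ω).indicator (fun z => dist z.1 z.2 ^ (e - 2)) z) := by
  set k : X × X → ℝ := fun z => dist z.1 z.2 ^ (e - 2)
  have hk₀ (z : X × X) : 0 ≤ k z := rpow_nonneg dist_nonneg _
  have hk : |energyIntegrand q e u z - energyIntegrand q e w z| ≤ 4 * L ^ 2 * k z := by
    linarith [abs_sub (energyIntegrand q e u z) (energyIntegrand q e w z),
      abs_energyIntegrand_le e hq hu z, abs_energyIntegrand_le e hq hw z]
  have h₁ := (Ω ×ˢ D).indicator_nonneg (fun z _ => hk₀ z) z
  have h₂ := (D ×ˢ Ω).indicator_nonneg (fun z _ => hk₀ z) z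
  by_cases hz₁ : z.1 ∈ Ω'
  · by_cases hz₂ : z.2 ∈ Ω'
    · rw [energyIntegrand, energyIntegrand, huw hz₁, huw hz₂, sub_self, abs_zero]
      positivity
    · have hz : z ∈ Ω ×ˢ D := ⟨hz.resolve_right fun h => hz₂ (hΩΩ' h), hD hz₂⟩
      rw [indicator_of_mem hz]
      nlinarith
  · have hz : z ∈ D ×ˢ Ω := ⟨hD hz₁, hz.resolve_left fun h => hz₁ (hΩΩ' h)⟩
    rw [indicator_of_mem hz]
    nlinarith

section

variable {E : Type*} [NormedAddCommGroup E] [NormedSpace ℝ E] [FiniteDimensional ℝ E]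
  [Nontrivial E] {p H : ℝ}

lemma radial_tail_eqOn :
    EqOn (fun y : ℝ => y ^ (finrank ℝ E - 1) • (Ici H).indicator (fun r => r ^ (-p)) y)
      ((Ici H).indicator fun y => y ^ ((finrank ℝ E : ℝ) - p - 1)) (Ioi 0) := by
  intro y (hy : 0 < y)
  by_cases hHy : y ∈ Ici H
  · have hdim : 1 ≤ finrank ℝ E := finrank_pos
    simp only [indicator_of_mem hHy, smul_eq_mul]
    rw [← rpow_natCast, Nat.cast_sub hdim, ← rpow_add hy]
    ring_nf
  · simp [indicator_of_notMem hHy]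

lemma integrableOn_radial_tail (hp : (finrank ℝ E : ℝ) < p) (hH : 0 < H) :
    IntegrableOn (fun y : ℝ => y ^ (finrank ℝ E - 1) • (Ici H).indicator (fun r => r ^ (-p)) y)
      (Ioi 0) := by
  refine (integrableOn_congr_fun (radial_tail_eqOn (E := E)) measurableSet_Ioi).2 ?_
  refine ((integrable_indicator_iff measurableSet_Ici).2 ?_).integrableOn
  exact (integrableOn_Ici_iff_integrableOn_Ioi).2 (integrableOn_Ioi_rpow_of_lt (by linarith) hH)

lemma setIntegral_radial_tail (hp : (finrank ℝ E : ℝ) < p) (hH : 0 < H) :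
    ∫ y in Ioi (0 : ℝ), y ^ (finrank ℝ E - 1) • (Ici H).indicator (fun r => r ^ (-p)) y =
      H ^ ((finrank ℝ E : ℝ) - p) / (p - finrank ℝ E) := by
  rw [setIntegral_congr_fun measurableSet_Ioi (radial_tail_eqOn (E := E)),
    setIntegral_indicator measurableSet_Ici, inter_eq_right.2 (Ici_subset_Ioi.2 hH),
    integral_Ici_eq_integral_Ioi, integral_Ioi_rpow_of_lt (by linarith) hH, sub_add_cancel,
    neg_div, ← div_neg, neg_sub]

variable [MeasurableSpace E] (μ : Measure E) [μ.IsAddHaarMeasure]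

noncomputable def tailConst (μ : Measure E) (p : ℝ) : ℝ :=
  finrank ℝ E * μ.real (ball 0 1) / (p - finrank ℝ E)

lemma tailConst_pos (hp : (finrank ℝ E : ℝ) < p) : 0 < tailConst μ p := by
  have hball : 0 < μ.real (ball 0 1) :=
    ENNReal.toReal_pos (measure_ball_pos μ 0 one_pos).ne' measure_ball_lt_top.ne
  have hdim : (0 : ℝ) < finrank ℝ E := by exact_mod_cast finrank_pos
  unfold tailConst
  exact div_pos (mul_pos hdim hball) (sub_pos.2 hp)

variable [BorelSpace E]

lemma integrable_norm_tail (hp : (finrank ℝ E : ℝ) < p) (hH : 0 < H) :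
    Integrable (fun x : E => (Ici H).indicator (fun r => r ^ (-p)) ‖x‖) μ :=
  (integrable_fun_norm_addHaar μ).2 (integrableOn_radial_tail hp hH)

lemma integral_norm_tail (hp : (finrank ℝ E : ℝ) < p) (hH : 0 < H) :
    ∫ x : E, (Ici H).indicator (fun r => r ^ (-p)) ‖x‖ ∂μ =
      tailConst μ p * H ^ ((finrank ℝ E : ℝ) - p) := by
  rw [integral_fun_norm_addHaar, setIntegral_radial_tail hp hH, tailConst, nsmul_eq_mul,
    smul_eq_mul]
  ring

lemma integrableOn_dist_rpow_neg (hp : (finrank ℝ E : ℝ) < p) (hH : 0 < H) (x : E) :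
    IntegrableOn (fun y => dist x y ^ (-p)) {y | H ≤ dist x y} μ := by
  rw [← integrable_indicator_iff (measurableSet_le measurable_const (by fun_prop)),
    indicator_le_dist_eq_indicator_Ici_norm_sub]
  exact (integrable_norm_tail μ hp hH).comp_sub_right x

lemma setIntegral_dist_rpow_neg (hp : (finrank ℝ E : ℝ) < p) (hH : 0 < H) (x : E) :
    ∫ y in {y | H ≤ dist x y}, dist x y ^ (-p) ∂μ =
      tailConst μ p * H ^ ((finrank ℝ E : ℝ) - p) := by
  rw [← integral_indicator (measurableSet_le measurable_const (by fun_prop)),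
    indicator_le_dist_eq_indicator_Ici_norm_sub, integral_sub_right_eq_self
      (fun y => (Ici H).indicator (fun r => r ^ (-p)) ‖y‖) x, integral_norm_tail μ hp hH]

lemma setIntegral_dist_rpow_neg_le (hp : (finrank ℝ E : ℝ) < p) (hH : 0 < H) {x : E}
    {B : Set E} (hB : ∀ y ∈ B, H ≤ dist x y) :
    ∫ y in B, dist x y ^ (-p) ∂μ ≤ tailConst μ p * H ^ ((finrank ℝ E : ℝ) - p) := by
  rw [← setIntegral_dist_rpow_neg μ hp hH x]
  exact setIntegral_mono_set (integrableOn_dist_rpow_neg μ hp hH x)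
    (.of_forall fun y => rpow_nonneg dist_nonneg _) (.of_forall hB)

lemma setIntegral_setIntegral_dist_rpow_neg_le (hp : (finrank ℝ E : ℝ) < p) (hH : 0 < H)
    {A B : Set E} (hA : μ A ≠ ⊤) (hAB : ∀ x ∈ A, ∀ y ∈ B, H ≤ dist x y) :
    ∫ x in A, ∫ y in B, dist x y ^ (-p) ∂μ ∂μ ≤
      tailConst μ p * H ^ ((finrank ℝ E : ℝ) - p) * μ.real A := by
  refine (Real.le_norm_self _).trans (norm_setIntegral_le_of_norm_le_const hA.lt_top fun x hx => ?_)
  rw [Real.norm_of_nonneg (integral_nonneg fun y => rpow_nonneg dist_nonneg _)]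
  exact setIntegral_dist_rpow_neg_le μ hp hH (hAB x hx)

lemma integrableOn_prod_dist_rpow_neg (hp : (finrank ℝ E : ℝ) < p) (hH : 0 < H)
    {A B : Set E} (hAm : MeasurableSet A) (hA : μ A ≠ ⊤) (hAB : ∀ x ∈ A, ∀ y ∈ B, H ≤ dist x y) :
    IntegrableOn (fun z : E × E => dist z.1 z.2 ^ (-p)) (A ×ˢ B) (μ.prod μ) := by
  have hmeas : AEStronglyMeasurable (fun z : E × E => dist z.1 z.2 ^ (-p))
      ((μ.restrict A).prod (μ.restrict B)) :=
    (measurable_dist.pow_const _).aestronglyMeasurable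
  rw [IntegrableOn, ← Measure.prod_restrict, integrable_prod_iff hmeas]
  refine ⟨ae_restrict_of_forall_mem hAm fun x hx =>
    (integrableOn_dist_rpow_neg μ hp hH x).mono_set (hAB x hx), ?_⟩
  refine (integrableOn_const hA (C := tailConst μ p * H ^ ((finrank ℝ E : ℝ) - p))).mono'
    hmeas.norm.integral_prod_right' ?_
  filter_upwards [ae_restrict_mem hAm] with x hx
  simp only [Real.norm_eq_abs, abs_of_nonneg (rpow_nonneg dist_nonneg _)]
  rw [abs_of_nonneg (integral_nonneg fun y => rpow_nonneg dist_nonneg _)]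
  exact setIntegral_dist_rpow_neg_le μ hp hH (hAB x hx)

lemma integrableOn_prod_swap_dist_rpow_neg (hp : (finrank ℝ E : ℝ) < p) (hH : 0 < H)
    {A B : Set E} (hAm : MeasurableSet A) (hA : μ A ≠ ⊤) (hAB : ∀ x ∈ A, ∀ y ∈ B, H ≤ dist x y) :
    IntegrableOn (fun z : E × E => dist z.1 z.2 ^ (-p)) (B ×ˢ A) (μ.prod μ) := by
  simpa only [Function.comp_def, Prod.fst_swap, Prod.snd_swap, dist_comm] using
    (integrableOn_prod_dist_rpow_neg μ hp hH hAm hA hAB).swap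

lemma integrable_indicator_prod_add_swap_dist_rpow_neg (hp : (finrank ℝ E : ℝ) < p)
    (hH : 0 < H) {A B : Set E} (hAm : MeasurableSet A) (hBm : MeasurableSet B) (hA : μ A ≠ ⊤)
    (hAB : ∀ x ∈ A, ∀ y ∈ B, H ≤ dist x y) :
    Integrable (fun z : E × E => (A ×ˢ B).indicator (fun z => dist z.1 z.2 ^ (-p)) z +
      (B ×ˢ A).indicator (fun z => dist z.1 z.2 ^ (-p)) z) (μ.prod μ) := by
  have hk := integrableOn_prod_dist_rpow_neg μ hp hH hAm hA hAB
  have hk_swap := integrableOn_prod_swap_dist_rpow_neg μ hp hH hAm hA hAB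
  exact ((integrable_indicator_iff (hAm.prod hBm)).2 hk).add
    ((integrable_indicator_iff (hBm.prod hAm)).2 hk_swap)

lemma integral_indicator_prod_add_swap_dist_rpow_neg_le (hp : (finrank ℝ E : ℝ) < p)
    (hH : 0 < H) {A B : Set E} (hAm : MeasurableSet A) (hBm : MeasurableSet B) (hA : μ A ≠ ⊤)
    (hAB : ∀ x ∈ A, ∀ y ∈ B, H ≤ dist x y) :
    ∫ z : E × E, ((A ×ˢ B).indicator (fun z => dist z.1 z.2 ^ (-p)) z +
      (B ×ˢ A).indicator (fun z => dist z.1 z.2 ^ (-p)) z) ∂(μ.prod μ) ≤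
      2 * (tailConst μ p * H ^ ((finrank ℝ E : ℝ) - p) * μ.real A) := by
  have hk := integrableOn_prod_dist_rpow_neg μ hp hH hAm hA hAB
  have hk_swap := integrableOn_prod_swap_dist_rpow_neg μ hp hH hAm hA hAB
  have h_swap : ∫ z in B ×ˢ A, dist z.1 z.2 ^ (-p) ∂(μ.prod μ) =
      ∫ z in A ×ˢ B, dist z.1 z.2 ^ (-p) ∂(μ.prod μ) := by
    simpa only [Prod.fst_swap, Prod.snd_swap, dist_comm] using
      setIntegral_prod_swap (μ := μ) (ν := μ) A B fun z : E × E => dist z.1 z.2 ^ (-p)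
  rw [integral_add ((integrable_indicator_iff (hAm.prod hBm)).2 hk)
      ((integrable_indicator_iff (hBm.prod hAm)).2 hk_swap), integral_indicator (hAm.prod hBm),
    integral_indicator (hBm.prod hAm), h_swap, setIntegral_prod _ hk]
  linarith [setIntegral_setIntegral_dist_rpow_neg_le μ hp hH hA hAB]

lemma abs_setIntegral_energyIntegrand_sub_le {q p H L : ℝ} (hq : 0 ≤ q)
    (hp : (finrank ℝ E : ℝ) < p) (hH : 0 < H) {Ω Ω' : Set E} (hΩ : MeasurableSet Ω)
    (hΩfin : μ Ω ≠ ⊤) (hΩΩ' : Ω ⊆ Ω') (hfar : ∀ x ∉ Ω', H ≤ infDist x Ω) {u w : E → ℝ}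
    (hu : ∀ x, |u x| ≤ L) (hw : ∀ x, |w x| ≤ L) (huw : EqOn u w Ω')
    (hui : IntegrableOn (energyIntegrand q (2 - p) u) {z | z.1 ∈ Ω ∨ z.2 ∈ Ω} (μ.prod μ))
    (hwi : IntegrableOn (energyIntegrand q (2 - p) w) {z | z.1 ∈ Ω ∨ z.2 ∈ Ω} (μ.prod μ)) :
    |∫ z in {z | z.1 ∈ Ω ∨ z.2 ∈ Ω}, energyIntegrand q (2 - p) u z ∂(μ.prod μ) -
        ∫ z in {z | z.1 ∈ Ω ∨ z.2 ∈ Ω}, energyIntegrand q (2 - p) w z ∂(μ.prod μ)| ≤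
      8 * L ^ 2 * (tailConst μ p * H ^ ((finrank ℝ E : ℝ) - p) * μ.real Ω) := by
  set Q : Set (E × E) := {z | z.1 ∈ Ω ∨ z.2 ∈ Ω}
  have hQ : MeasurableSet Q := (measurable_fst hΩ).union (measurable_snd hΩ)
  set D : Set E := {y | H ≤ infDist y Ω}
  have hD : MeasurableSet D :=
    measurableSet_le measurable_const (continuous_infDist_pt Ω).measurable
  have hsep : ∀ x ∈ Ω, ∀ y ∈ D, H ≤ dist x y := fun x hx y hy => le_dist_of_le_infDist hx hy
  set k : E × E → ℝ := fun z => dist z.1 z.2 ^ (-p)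
  set M : E × E → ℝ := fun z => (Ω ×ˢ D).indicator k z + (D ×ˢ Ω).indicator k z
  have hM : Integrable M (μ.prod μ) :=
    integrable_indicator_prod_add_swap_dist_rpow_neg μ hp hH hΩ hD hΩfin hsep
  have hM₀ : 0 ≤ᵐ[μ.prod μ] M := .of_forall fun z =>
    add_nonneg ((Ω ×ˢ D).indicator_nonneg (fun z _ => rpow_nonneg dist_nonneg _) z)
      ((D ×ˢ Ω).indicator_nonneg (fun z _ => rpow_nonneg dist_nonneg _) z)
  have hle : ∀ z ∈ Q,
      |energyIntegrand q (2 - p) u z - energyIntegrand q (2 - p) w z| ≤ 4 * L ^ 2 * M z :=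
    fun z hz => by
      simpa only [show 2 - p - 2 = -p by ring] using
        abs_energyIntegrand_sub_le_indicator (2 - p) hq hΩΩ' (D := D) hfar hu hw huw hz
  rw [← integral_sub hui hwi]
  calc _ ≤ ∫ z in Q, |energyIntegrand q (2 - p) u z - energyIntegrand q (2 - p) w z| ∂(μ.prod μ) :=
        abs_integral_le_integral_abs
    _ ≤ ∫ z in Q, 4 * L ^ 2 * M z ∂(μ.prod μ) :=
        integral_mono_of_nonneg (.of_forall fun _ => abs_nonneg _)
          (hM.const_mul _).integrableOn (ae_restrict_of_forall_mem hQ hle)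
    _ ≤ 4 * L ^ 2 * ∫ z, M z ∂(μ.prod μ) := by
        rw [integral_const_mul]
        exact mul_le_mul_of_nonneg_left (setIntegral_le_integral hM hM₀) (by positivity)
    _ ≤ _ := by
        have := integral_indicator_prod_add_swap_dist_rpow_neg_le μ hp hH hΩ hD hΩfin hsep
        nlinarith [sq_nonneg L]

end

theorem truncation_energy_estimate_general (d : ℕ) (hd : 1 ≤ d) (s : ℝ) (hs : s ∈ Set.Ioo (0:ℝ) (1/2))
    (Ω : Set (EuclideanSpace ℝ (Fin d))) (hΩmeas : MeasurableSet Ω)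
    (R₀ : ℝ) (hΩbdd : Ω ⊆ Metric.ball (0 : EuclideanSpace ℝ (Fin d)) R₀)
    (L : ℝ)
    (v : EuclideanSpace ℝ (Fin d) → ℝ) (hv : ∀ x, |v x| ≤ L)
    (QΩ : Set (EuclideanSpace ℝ (Fin d) × EuclideanSpace ℝ (Fin d)))
    (hQ : QΩ = {z | z.1 ∈ Ω ∨ z.2 ∈ Ω})
    (F : ℝ → ℝ)
    (hF : ∀ ρ : ℝ, F ρ = ∫ r in (0:ℝ)..ρ, (ρ - r) / (1 + r^2) ^ (((d:ℝ) + 1 + 2*s)/2))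
    (Is : (EuclideanSpace ℝ (Fin d) → ℝ) → ℝ)
    (hIs : ∀ u, Is u =
      ∫ z in QΩ, F ((u z.1 - u z.2) / dist z.1 z.2) * (dist z.1 z.2) ^ (1 - (d:ℝ) - 2*s)) :
    ∃ C C' : ℝ, 0 < C ∧ 0 < C' ∧
      ∀ H : ℝ, 0 < H →
      ∀ ΩH : Set (EuclideanSpace ℝ (Fin d)), Ω ⊆ ΩH →
        (∀ x, x ∉ ΩH → H ≤ Metric.infDist x Ω) →
      ∀ TH : EuclideanSpace ℝ (Fin d) → ℝ,
        (∀ x ∈ ΩH, TH x = v x) → (∀ x, |TH x| ≤ L) →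
        IntegrableOn (fun z => F ((v z.1 - v z.2) / dist z.1 z.2) *
          (dist z.1 z.2) ^ (1 - (d:ℝ) - 2*s)) QΩ →
        IntegrableOn (fun z => F ((TH z.1 - TH z.2) / dist z.1 z.2) *
          (dist z.1 z.2) ^ (1 - (d:ℝ) - 2*s)) QΩ →
        (∫ x in Ω, ∫ y in ΩHᶜ, (dist x y) ^ (-((d:ℝ) + 2*s + 1)) ≤
            C * (volume Ω).toReal * H ^ (-1 - 2*s)) ∧
        |Is v - Is TH| ≤ C' * H ^ (-1 - 2*s) := by
  subst hQ
  have : NeZero d := ⟨by omega⟩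
  set p : ℝ := (d : ℝ) + 2 * s + 1
  have hp : (finrank ℝ (EuclideanSpace ℝ (Fin d)) : ℝ) < p := by
    rw [finrank_euclideanSpace_fin]; linarith [hs.1]
  have hexp : (finrank ℝ (EuclideanSpace ℝ (Fin d)) : ℝ) - p = -1 - 2 * s := by
    rw [finrank_euclideanSpace_fin]; ring
  obtain rfl : F = energyDensity (((d : ℝ) + 1 + 2 * s) / 2) := funext hF
  have hq : 0 ≤ ((d : ℝ) + 1 + 2 * s) / 2 := by linarith [hs.1]
  rw [show 1 - (d : ℝ) - 2 * s = 2 - p by ring] at hIs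
  have hΩfin : volume Ω ≠ ⊤ := ((measure_mono hΩbdd).trans_lt measure_ball_lt_top).ne
  have hK := tailConst_pos volume hp
  refine ⟨tailConst volume p, 8 * L ^ 2 * (volume Ω).toReal * tailConst volume p + 1, hK,
    by positivity, fun H hH ΩH hΩΩH hfar TH hTH hTHL hIv hIT => ⟨?_, ?_⟩⟩
  · have := setIntegral_setIntegral_dist_rpow_neg_le volume hp hH (B := ΩHᶜ) hΩfin
      fun x hx y hy => le_dist_of_le_infDist hx (hfar y hy)
    rw [hexp, measureReal_def] at this
    linarith
  · rw [show 1 - (d : ℝ) - 2 * s = 2 - p by ring] at hIv hIT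
    have := abs_setIntegral_energyIntegrand_sub_le volume hq hp hH hΩmeas hΩfin hΩΩH hfar hv hTHL
      (fun x hx => (hTH x hx).symm) hIv hIT
    rw [hexp, measureReal_def] at this
    rw [hIs, hIs]
    refine this.trans ?_
    linarith [rpow_pos_of_pos hH (-1 - 2 * s)]

theorem truncation_energy_estimate (d : ℕ) (hd : 1 ≤ d) (s : ℝ) (hs : s ∈ Set.Ioo (0:ℝ) (1/2))
    (Ω : Set (EuclideanSpace ℝ (Fin d))) (hΩmeas : MeasurableSet Ω)
    (R₀ : ℝ) (hR₀ : 0 < R₀) (hΩbdd : Ω ⊆ Metric.ball (0 : EuclideanSpace ℝ (Fin d)) R₀)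
    (L : ℝ) (hL : 0 < L)
    (v : EuclideanSpace ℝ (Fin d) → ℝ) (hv : ∀ x, |v x| ≤ L)
    (QΩ : Set (EuclideanSpace ℝ (Fin d) × EuclideanSpace ℝ (Fin d)))
    (hQ : QΩ = {z | z.1 ∈ Ω ∨ z.2 ∈ Ω})
    (F : ℝ → ℝ)
    (hF : ∀ ρ : ℝ, F ρ = ∫ r in (0:ℝ)..ρ, (ρ - r) / (1 + r^2) ^ (((d:ℝ) + 1 + 2*s)/2))
    (Is : (EuclideanSpace ℝ (Fin d) → ℝ) → ℝ)
    (hIs : ∀ u, Is u =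
      ∫ z in QΩ, F ((u z.1 - u z.2) / dist z.1 z.2) * (dist z.1 z.2) ^ (1 - (d:ℝ) - 2*s)) :
    ∃ C C' : ℝ, 0 < C ∧ 0 < C' ∧
      ∀ H : ℝ, 0 < H →
      ∀ ΩH : Set (EuclideanSpace ℝ (Fin d)), Ω ⊆ ΩH →
        (∀ x, x ∉ ΩH → H ≤ Metric.infDist x Ω) →
      ∀ TH : EuclideanSpace ℝ (Fin d) → ℝ,
        (∀ x ∈ ΩH, TH x = v x) → (∀ x, |TH x| ≤ L) →
        IntegrableOn (fun z => F ((v z.1 - v z.2) / dist z.1 z.2) *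
          (dist z.1 z.2) ^ (1 - (d:ℝ) - 2*s)) QΩ →
        IntegrableOn (fun z => F ((TH z.1 - TH z.2) / dist z.1 z.2) *
          (dist z.1 z.2) ^ (1 - (d:ℝ) - 2*s)) QΩ →
        (∫ x in Ω, ∫ y in ΩHᶜ, (dist x y) ^ (-((d:ℝ) + 2*s + 1)) ≤
            C * (volume Ω).toReal * H ^ (-1 - 2*s)) ∧
        |Is v - Is TH| ≤ C' * H ^ (-1 - 2*s) :=
  truncation_energy_estimate_general d hd s hs Ω hΩmeas R₀ hΩbdd L v hv QΩ hQ F hF Is hIs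
end
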